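/- arXiv:2402.05580 — 5 statements merged into one kernel-verified Lean document; each statement's English description precedes it below -/
import Mathlib

section
/- The curve σ(s) = (s, cosh s)/(s² + cosh² s), s ∈ ℝ (the image of s ↦ (s, cosh s) under inversion at the unit circle), takes values in the hyperbolic half-plane, is parametrized by hyperbolic arclength, i.e. (σ¹)'(s)² + (σ²)'(s)² = σ²(s)² for all s ∈ ℝ, and its hyperbolic covariant acceleration A[σ] has hyperbolic norm ((A¹[σ](s))² + (A²[σ](s))²)/σ²(s)² = 4/cosh²(s) for all s ∈ ℝ; hence the hyperbolic geodesic curvature of σ has absolute value 2/cosh s. -/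
/-- Hyperbolic covariant acceleration, first component:
`A¹[σ] = (σ¹)'' − 2(σ¹)'(σ²)'/σ²`. -/
noncomputable def hypAccel1 (σ1 σ2 : ℝ → ℝ) (s : ℝ) : ℝ :=
  deriv (deriv σ1) s - 2 * deriv σ1 s * deriv σ2 s / σ2 s

/-- Hyperbolic covariant acceleration, second component:
`A²[σ] = (σ²)'' + ((σ¹)'² − (σ²)'²)/σ²`. -/
noncomputable def hypAccel2 (σ1 σ2 : ℝ → ℝ) (s : ℝ) : ℝ :=
  deriv (deriv σ2) s + ((deriv σ1 s) ^ 2 - (deriv σ2 s) ^ 2) / σ2 s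

/-- First component of the inverted catenoid profile curve
`σ(s) = (s, cosh s)/(s² + cosh² s)`. -/
noncomputable def invCat1 (s : ℝ) : ℝ := s / (s ^ 2 + Real.cosh s ^ 2)

/-- Second component of the inverted catenoid profile curve. -/
noncomputable def invCat2 (s : ℝ) : ℝ := Real.cosh s / (s ^ 2 + Real.cosh s ^ 2)


/-!
Inversion in the unit circle, `(x, y) ↦ (x, y)/(x² + y²)`, is an isometry of `ℍ`, so it preserves
the hyperbolic speed of a curve and the hyperbolic norm of its covariant acceleration, as a direct
computation confirms for any `C²` curve `(a, b)` avoiding the origin. The curve `σ` is the image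
of the catenary `(s, cosh s)`, whose Euclidean speed `cosh s` equals its height, so the catenary is
parametrized by hyperbolic arclength, and its covariant acceleration `(-2 tanh s, 2 / cosh s)` has
hyperbolic norm `2 / cosh s`.
-/

open Real

noncomputable def hypAccelNormSq (σ1 σ2 : ℝ → ℝ) (s : ℝ) : ℝ :=
  (hypAccel1 σ1 σ2 s ^ 2 + hypAccel2 σ1 σ2 s ^ 2) / σ2 s ^ 2

section Inversion

variable {f a b : ℝ → ℝ}

theorem deriv_div_normSq (hf : Differentiable ℝ f) (ha : Differentiable ℝ a)
    (hb : Differentiable ℝ b) (hq : ∀ t, a t ^ 2 + b t ^ 2 ≠ 0) :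
    deriv (fun t => f t / (a t ^ 2 + b t ^ 2)) = fun t =>
      (deriv f t * (a t ^ 2 + b t ^ 2) - 2 * f t * (a t * deriv a t + b t * deriv b t)) /
        (a t ^ 2 + b t ^ 2) ^ 2 := by
  ext t
  refine HasDerivAt.deriv ?_
  refine ((hf t).hasDerivAt.div (((ha t).hasDerivAt.pow 2).add ((hb t).hasDerivAt.pow 2))
    (hq t)).congr_deriv ?_
  simp only [Pi.add_apply, Pi.pow_apply]
  ring

theorem deriv_deriv_div_normSq (hf : Differentiable ℝ f) (ha : Differentiable ℝ a)
    (hb : Differentiable ℝ b) (hf' : Differentiable ℝ (deriv f))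
    (ha' : Differentiable ℝ (deriv a)) (hb' : Differentiable ℝ (deriv b))
    (hq : ∀ t, a t ^ 2 + b t ^ 2 ≠ 0) (s : ℝ) :
    deriv (deriv (fun t => f t / (a t ^ 2 + b t ^ 2))) s =
      ((deriv (deriv f) s * (a s ^ 2 + b s ^ 2)
          - 2 * f s * (deriv a s ^ 2 + a s * deriv (deriv a) s + deriv b s ^ 2
            + b s * deriv (deriv b) s)) * (a s ^ 2 + b s ^ 2)
        - 4 * (deriv f s * (a s ^ 2 + b s ^ 2)
          - 2 * f s * (a s * deriv a s + b s * deriv b s)) * (a s * deriv a s + b s * deriv b s))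
        / (a s ^ 2 + b s ^ 2) ^ 3 := by
  rw [deriv_div_normSq hf ha hb hq]
  refine HasDerivAt.deriv ?_
  have hq' := ((ha s).hasDerivAt.pow 2).add ((hb s).hasDerivAt.pow 2)
  have hp := ((ha s).hasDerivAt.mul (ha' s).hasDerivAt).add
    ((hb s).hasDerivAt.mul (hb' s).hasDerivAt)
  refine ((((hf' s).hasDerivAt.mul hq').sub (((hf s).hasDerivAt.const_mul 2).mul hp)).div
    (hq'.pow 2) (pow_ne_zero 2 (hq s))).congr_deriv ?_
  have := hq s
  simp only [Pi.add_apply, Pi.pow_apply, Pi.mul_apply, Pi.sub_apply]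
  field_simp
  ring

theorem deriv_sq_add_deriv_sq_inversion (ha : Differentiable ℝ a) (hb : Differentiable ℝ b)
    (hq : ∀ t, a t ^ 2 + b t ^ 2 ≠ 0) (s : ℝ) :
    deriv (fun t => a t / (a t ^ 2 + b t ^ 2)) s ^ 2
        + deriv (fun t => b t / (a t ^ 2 + b t ^ 2)) s ^ 2 =
      (deriv a s ^ 2 + deriv b s ^ 2) / (a s ^ 2 + b s ^ 2) ^ 2 := by
  rw [deriv_div_normSq ha ha hb hq, deriv_div_normSq hb ha hb hq]
  have := hq s
  field_simp
  ring

theorem hypAccelNormSq_inversion (ha : Differentiable ℝ a) (hb : Differentiable ℝ b)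
    (ha' : Differentiable ℝ (deriv a)) (hb' : Differentiable ℝ (deriv b))
    (hq : ∀ t, a t ^ 2 + b t ^ 2 ≠ 0) (s : ℝ) (hbs : b s ≠ 0) :
    hypAccelNormSq (fun t => a t / (a t ^ 2 + b t ^ 2)) (fun t => b t / (a t ^ 2 + b t ^ 2)) s =
      hypAccelNormSq a b s := by
  rw [hypAccelNormSq, hypAccelNormSq, hypAccel1, hypAccel2, hypAccel1, hypAccel2,
    deriv_deriv_div_normSq ha ha hb ha' ha' hb' hq,
    deriv_deriv_div_normSq hb ha hb hb' ha' hb' hq,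
    deriv_div_normSq ha ha hb hq, deriv_div_normSq hb ha hb hq]
  have := hq s
  field_simp
  ring

end Inversion

theorem catenary_deriv_sq_add_deriv_sq (s : ℝ) :
    deriv (fun t : ℝ => t) s ^ 2 + deriv cosh s ^ 2 = cosh s ^ 2 := by
  rw [deriv_id'', Real.deriv_cosh, cosh_sq]
  ring

theorem catenary_hypAccelNormSq (s : ℝ) :
    hypAccelNormSq (fun t : ℝ => t) cosh s = 4 / cosh s ^ 2 := by
  rw [hypAccelNormSq, hypAccel1, hypAccel2, deriv_id'', Real.deriv_cosh, Real.deriv_sinh,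
    deriv_const]
  have := (cosh_pos s).ne'
  field_simp
  rw [cosh_sq]
  ring

/-- the inverted catenoid profile curve
`σ(s) = (s, cosh s)/(s² + cosh² s)` takes values in the hyperbolic half-plane,
is parametrized by hyperbolic arclength, and the hyperbolic norm squared of its
hyperbolic covariant acceleration equals `4 / cosh² s`; hence its hyperbolic
geodesic curvature has absolute value `2 / cosh s`. -/
theorem inverted_catenoid_hyperbolic_curvature :
    ∀ s : ℝ,
      0 < invCat2 s ∧
      (deriv invCat1 s) ^ 2 + (deriv invCat2 s) ^ 2 = (invCat2 s) ^ 2 ∧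
      ((hypAccel1 invCat1 invCat2 s) ^ 2 + (hypAccel2 invCat1 invCat2 s) ^ 2) /
          (invCat2 s) ^ 2 = 4 / Real.cosh s ^ 2 := by
  intro s
  have hq (t : ℝ) : t ^ 2 + cosh t ^ 2 ≠ 0 := by positivity
  have hid' : Differentiable ℝ (deriv fun t : ℝ => t) := by simp
  have hcosh' : Differentiable ℝ (deriv cosh) := by simp
  refine ⟨div_pos (cosh_pos s) (by positivity), ?_, ?_⟩
  · calc deriv invCat1 s ^ 2 + deriv invCat2 s ^ 2
        = (deriv (fun t : ℝ => t) s ^ 2 + deriv cosh s ^ 2) / (s ^ 2 + cosh s ^ 2) ^ 2 :=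
          deriv_sq_add_deriv_sq_inversion differentiable_id differentiable_cosh hq s
      _ = invCat2 s ^ 2 := by rw [catenary_deriv_sq_add_deriv_sq, invCat2, div_pow]
  · calc hypAccelNormSq invCat1 invCat2 s = hypAccelNormSq (fun t : ℝ => t) cosh s :=
          hypAccelNormSq_inversion differentiable_id differentiable_cosh hid' hcosh' hq s
            (cosh_pos s).ne'
      _ = 4 / cosh s ^ 2 := catenary_hypAccelNormSq s
end

section
/- Let α > 0 and x ∈ ℝ with |x| > α. Then (x + α)/(x − α) > 0, the number s₀ = log((x + α)/(x − α)) is nonzero, and α(1 + cosh s₀)/sinh s₀ = x. -/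
/-! With `t = (x + α)/(x − α)` and `s₀ = log t`, the identity
`(1 + cosh s)/sinh s = (eˢ + 1)/(eˢ − 1)` turns the left-hand side into `α (t + 1)/(t − 1)`,
and `(t + 1)/(t − 1) = x/α`. -/

open Real

lemma one_add_cosh_div_sinh {s : ℝ} (hs : s ≠ 0) :
    (1 + cosh s) / sinh s = (exp s + 1) / (exp s - 1) := by
  have hsinh : sinh s ≠ 0 := sinh_eq_zero.not.mpr hs
  have hexp : exp s - 1 ≠ 0 := sub_ne_zero.mpr ((exp_eq_one_iff s).not.mpr hs)
  have hexp_neg : exp (-s) * exp s = 1 := by rw [← exp_add, neg_add_cancel, exp_zero]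
  rw [div_eq_div_iff hsinh hexp]
  linear_combination exp s * cosh_sub_sinh s - cosh_add_sinh s + hexp_neg

lemma div_sub_pos_of_sq_lt_sq {α x : ℝ} (h : α ^ 2 < x ^ 2) : 0 < (x + α) / (x - α) :=
  div_pos_iff.mpr <| pos_and_pos_or_neg_and_neg_of_mul_pos <| by nlinarith

lemma div_sub_ne_one {α x : ℝ} (hα : α ≠ 0) : (x + α) / (x - α) ≠ 1 := by
  intro h
  rcases eq_or_ne (x - α) 0 with hx | hx
  · simp [hx] at h
  · rw [div_eq_one_iff_eq hx] at h
    exact hα (by linarith)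

lemma div_sub_add_one_div_sub_one {α x : ℝ} (hα : α ≠ 0) (hx : x - α ≠ 0) :
    ((x + α) / (x - α) + 1) / ((x + α) / (x - α) - 1) = x / α := by
  have hden : x + α - (x - α) ≠ 0 := by
    rw [add_sub_sub_cancel, ← two_mul]
    exact mul_ne_zero two_ne_zero hα
  rw [div_add_one hx, div_sub_one hx, div_div_div_cancel_right₀ hx, div_eq_div_iff hden hα]
  ring

/-- eq. (3.17): for `α > 0` and `|x| > α`, the quotient
`(x + α)/(x − α)` is positive, `s₀ = log((x + α)/(x − α))` is nonzero, and
`α(1 + cosh s₀)/sinh s₀ = x`. -/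
theorem explicit_inverse_of_singular_point_function
    (α x : ℝ) (hα : 0 < α) (hx : α < |x|) :
    0 < (x + α) / (x - α) ∧
    Real.log ((x + α) / (x - α)) ≠ 0 ∧
    α * (1 + Real.cosh (Real.log ((x + α) / (x - α)))) /
        Real.sinh (Real.log ((x + α) / (x - α))) = x := by
  have hsq : α ^ 2 < x ^ 2 := sq_lt_sq.mpr (by rwa [abs_of_pos hα])
  have hpos := div_sub_pos_of_sq_lt_sq hsq
  have hlog := log_ne_zero_of_pos_of_ne_one hpos (div_sub_ne_one hα.ne')
  have hsub : x - α ≠ 0 := by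
    rintro h
    simp [h] at hpos
  refine ⟨hpos, hlog, ?_⟩
  rw [mul_div_assoc, one_add_cosh_div_sinh hlog, exp_log hpos,
    div_sub_add_one_div_sub_one hα.ne' hsub, mul_div_cancel₀ x hα.ne']
end

section
/- For all α₋, α₊ > 0 there exists x₀ ∈ ℝ such that W_{α₋,α₊}(x₀) < 8 and W_{α₋,α₊}(x₀) ≤ W_{α₋,α₊}(x) for all x ∈ ℝ; that is, the infimum of W_{α₋,α₊} over ℝ ∪ {∞} (with the value at ∞ equal to 8) is attained at a finite point. -/
/-- The elastic energy `W_{α₋,α₊}(x)` of the pair of asymptotic-geodesic arcs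
meeting at `(x, 0)` (eq. (3.22)). -/
noncomputable def Wenergy (αm αp x : ℝ) : ℝ :=
  8 + 8 * (αp * (x - 1) / (αp ^ 2 + (x - 1) ^ 2)
    - αm * (x + 1) / (αm ^ 2 + (x + 1) ^ 2))

/-!
`W_{α₋,α₊}` is continuous and tends to `8` at `±∞`, while `W_{α₋,α₊}(-1) < 8` because only the
`α₊`-term survives there and it is negative. A continuous function that near infinity stays above
one of its values attains its minimum.
-/

open Filter Topology

theorem continuous_mul_sub_div_sq_add_sq (a c : ℝ) :
    Continuous fun x : ℝ => a * (x - c) / (a ^ 2 + (x - c) ^ 2) := by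
  rcases eq_or_ne a 0 with rfl | ha
  · simpa using continuous_const
  · exact Continuous.div (by fun_prop) (by fun_prop) fun x => by positivity

theorem abs_mul_sub_div_sq_add_sq_le (a c x : ℝ) :
    |a * (x - c) / (a ^ 2 + (x - c) ^ 2)| ≤ |a| / |x - c| := by
  rcases eq_or_ne (x - c) 0 with h | h
  · simp [h]
  · have hpos : 0 < |x - c| := abs_pos.mpr h
    rw [abs_div, abs_mul, abs_of_nonneg (by positivity : (0 : ℝ) ≤ a ^ 2 + (x - c) ^ 2),
      div_le_div_iff₀ (by positivity) hpos, ← sq_abs (x - c)]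
    nlinarith [abs_nonneg a, sq_nonneg a]

theorem tendsto_mul_sub_div_sq_add_sq_cocompact (a c : ℝ) :
    Tendsto (fun x : ℝ => a * (x - c) / (a ^ 2 + (x - c) ^ 2)) (cocompact ℝ) (𝓝 0) := by
  have hdist : Tendsto (fun x : ℝ => |x - c|) (cocompact ℝ) atTop := by
    simpa only [Real.dist_eq] using tendsto_dist_right_cocompact_atTop c
  exact squeeze_zero_norm (abs_mul_sub_div_sq_add_sq_le a c)
    (tendsto_const_nhds.div_atTop hdist)

theorem Wenergy_eq (αm αp x : ℝ) :
    Wenergy αm αp x = 8 + 8 * (αp * (x - 1) / (αp ^ 2 + (x - 1) ^ 2)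
      - αm * (x - -1) / (αm ^ 2 + (x - -1) ^ 2)) := by
  rw [Wenergy, sub_neg_eq_add]

theorem continuous_Wenergy (αm αp : ℝ) : Continuous (Wenergy αm αp) := by
  simp only [funext (Wenergy_eq αm αp)]
  exact continuous_const.add <| continuous_const.mul <|
    (continuous_mul_sub_div_sq_add_sq αp 1).sub (continuous_mul_sub_div_sq_add_sq αm (-1))

theorem tendsto_Wenergy_cocompact (αm αp : ℝ) :
    Tendsto (Wenergy αm αp) (cocompact ℝ) (𝓝 8) := by
  have h := tendsto_const_nhds (x := (8 : ℝ)).add <| tendsto_const_nhds (x := (8 : ℝ)).mul <|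
    (tendsto_mul_sub_div_sq_add_sq_cocompact αp 1).sub
      (tendsto_mul_sub_div_sq_add_sq_cocompact αm (-1))
  simpa only [sub_zero, mul_zero, add_zero, ← Wenergy_eq] using h

theorem Wenergy_neg_one_lt_eight (αm : ℝ) {αp : ℝ} (hαp : 0 < αp) : Wenergy αm αp (-1) < 8 := by
  have hterm : αp * (-1 - 1) / (αp ^ 2 + (-1 - 1) ^ 2) < 0 :=
    div_neg_of_neg_of_pos (by linarith) (by positivity)
  simp only [Wenergy, neg_add_cancel, mul_zero, zero_div, sub_zero]
  linarith

theorem energy_infimum_attained_general (αm αp : ℝ) (hαp : 0 < αp) :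
    ∃ x₀ : ℝ, Wenergy αm αp x₀ < 8 ∧ ∀ x : ℝ, Wenergy αm αp x₀ ≤ Wenergy αm αp x := by
  have hlt := Wenergy_neg_one_lt_eight αm hαp
  have hfar : ∀ᶠ x in cocompact ℝ, Wenergy αm αp (-1) ≤ Wenergy αm αp x :=
    ((tendsto_Wenergy_cocompact αm αp).eventually (eventually_gt_nhds hlt)).mono fun _ h => h.le
  obtain ⟨x₀, hmin⟩ := (continuous_Wenergy αm αp).exists_forall_le' (-1) hfar
  exact ⟨x₀, (hmin (-1)).trans_lt hlt, hmin⟩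

/-- for all `α₋, α₊ > 0` the infimum of `W_{α₋,α₊}` over
`ℝ ∪ {∞}` (value `8` at `∞`) is attained at a finite point: there is `x₀ ∈ ℝ`
with `W_{α₋,α₊}(x₀) < 8` and `W_{α₋,α₊}(x₀) ≤ W_{α₋,α₊}(x)` for all `x ∈ ℝ`. -/
theorem energy_infimum_attained (αm αp : ℝ) (hαm : 0 < αm) (hαp : 0 < αp) :
    ∃ x₀ : ℝ, Wenergy αm αp x₀ < 8 ∧ ∀ x : ℝ, Wenergy αm αp x₀ ≤ Wenergy αm αp x :=
  energy_infimum_attained_general αm αp hαp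
end

section
/- Fix α₋ > 0. For every ε > 0 there exists M > 0 such that for all α₊ ≥ M and all x ∈ ℝ one has W_{α₋,α₊}(x) ≥ 4 − ε. Consequently, since the value of W_{α₋,α₊} at x = ∞ equals 8, the liminf as α₊ → ∞ of inf{ W_{α₋,α₊}(x) : x ∈ ℝ ∪ {∞} } is at least 4. -/
open Filter

lemma half_bound (a t : ℝ) (ha : 0 < a) : |a * t / (a ^ 2 + t ^ 2)| ≤ 1 / 2 := by
  have hd : (0 : ℝ) < a ^ 2 + t ^ 2 := by positivity
  rw [abs_div, abs_of_pos hd, div_le_iff₀ hd]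
  nlinarith [sq_nonneg (|a| - |t|), abs_mul a t, sq_abs a, sq_abs t, abs_nonneg (a * t)]

lemma lin_bound1 (a t : ℝ) (ha : 0 < a) : |a * t / (a ^ 2 + t ^ 2)| ≤ |t| / a := by
  have hd : (0 : ℝ) < a ^ 2 + t ^ 2 := by positivity
  rw [abs_div, abs_of_pos hd, div_le_div_iff₀ hd ha, abs_mul, abs_of_pos ha]
  nlinarith [abs_nonneg t, sq_nonneg t]

lemma lin_bound2 (a t : ℝ) (ha : 0 < a) (ht : t ≠ 0) :
    |a * t / (a ^ 2 + t ^ 2)| ≤ a / |t| := by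
  have hd : (0 : ℝ) < a ^ 2 + t ^ 2 := by positivity
  have ht' : (0 : ℝ) < |t| := abs_pos.mpr ht
  rw [abs_div, abs_of_pos hd, div_le_div_iff₀ hd ht', abs_mul, abs_of_pos ha]
  nlinarith [sq_abs t, sq_nonneg a]

/-- eq. (3.24): for fixed `α₋ > 0`, for every `ε > 0` there is
`M > 0` with `W_{α₋,α₊}(x) ≥ 4 − ε` for all `α₊ ≥ M` and all `x ∈ ℝ`;
consequently the liminf as `α₊ → ∞` of the infimum of `W_{α₋,α₊}` over
`ℝ ∪ {∞}` (value `8` at `∞`) is at least `4`. -/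
theorem energy_asymptotic_lower_bound (αm : ℝ) (hαm : 0 < αm) :
    (∀ ε > (0 : ℝ), ∃ M > (0 : ℝ), ∀ αp ≥ M, ∀ x : ℝ, 4 - ε ≤ Wenergy αm αp x) ∧
    4 ≤ Filter.liminf
        (fun αp : ℝ => sInf (insert (8 : ℝ) (Set.range fun x : ℝ => Wenergy αm αp x)))
        atTop := by
  have main : ∀ ε > (0 : ℝ), ∃ M > (0 : ℝ), ∀ αp ≥ M, ∀ x : ℝ, 4 - ε ≤ Wenergy αm αp x := by
    intro ε hε
    set R : ℝ := 16 * αm / ε with hR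
    have hRpos : 0 < R := by positivity
    refine ⟨max 1 (16 * (R + 2) / ε), lt_of_lt_of_le one_pos (le_max_left _ _), ?_⟩
    intro αp hαp x
    have hαp1 : (1 : ℝ) ≤ αp := le_trans (le_max_left _ _) hαp
    have hαp0 : (0 : ℝ) < αp := lt_of_lt_of_le one_pos hαp1
    set A : ℝ := αp * (x - 1) / (αp ^ 2 + (x - 1) ^ 2) with hA
    set B : ℝ := αm * (x + 1) / (αm ^ 2 + (x + 1) ^ 2) with hB
    have hW : Wenergy αm αp x = 8 + 8 * (A - B) := rfl
    have key : -1 / 2 - ε / 16 ≤ A - B := by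
      by_cases h : |x + 1| ≤ R
      · -- x near -1: A is small, B ≤ 1/2
        have hx1 : |x - 1| ≤ R + 2 := by
          have : x - 1 = (x + 1) - 2 := by ring
          rw [this]
          calc |(x + 1) - 2| ≤ |x + 1| + |(2 : ℝ)| := abs_sub _ _
            _ ≤ R + 2 := by rw [abs_two]; linarith
        have hA1 : |A| ≤ |x - 1| / αp := lin_bound1 αp (x - 1) hαp0
        have h2 : |x - 1| / αp ≤ (R + 2) / αp := by gcongr
        have hαpM : 16 * (R + 2) / ε ≤ αp := le_trans (le_max_right _ _) hαp
        have h3 : (R + 2) / αp ≤ ε / 16 := by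
          rw [div_le_div_iff₀ hαp0 (by norm_num : (0:ℝ) < 16)]
          have : 16 * (R + 2) ≤ ε * αp := by
            rw [div_le_iff₀ hε] at hαpM
            linarith [hαpM]
          linarith
        have hAbound : |A| ≤ ε / 16 := le_trans hA1 (le_trans h2 h3)
        have hBbound : |B| ≤ 1 / 2 := half_bound αm (x + 1) hαm
        have := abs_le.mp hAbound
        have := abs_le.mp hBbound
        linarith [this.2, (abs_le.mp hAbound).1]
      · -- |x+1| > R: B is small, A ≥ -1/2
        push_neg at h
        have hne : x + 1 ≠ 0 := by
          intro h0
          rw [h0, abs_zero] at h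
          exact absurd h (not_lt.mpr hRpos.le)
        have hB1 : |B| ≤ αm / |x + 1| := lin_bound2 αm (x + 1) hαm hne
        have h2 : αm / |x + 1| ≤ αm / R := by
          apply div_le_div_of_nonneg_left hαm.le hRpos h.le
        have h3 : αm / R = ε / 16 := by
          rw [hR]
          field_simp
        have hBbound : |B| ≤ ε / 16 := by rw [← h3]; exact le_trans hB1 h2
        have hAbound : |A| ≤ 1 / 2 := half_bound αp (x - 1) hαp0
        linarith [(abs_le.mp hAbound).1, (abs_le.mp hBbound).2]
    rw [hW]; linarith
  refine ⟨main, ?_⟩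
  set u : ℝ → ℝ := fun αp => sInf (insert (8 : ℝ) (Set.range fun x : ℝ => Wenergy αm αp x))
  have hub : ∀ αp : ℝ, 0 < αp → u αp ≤ 8 := by
    intro αp hαp0
    apply csInf_le
    · refine ⟨0, ?_⟩
      rintro y (rfl | ⟨x, rfl⟩)
      · norm_num
      · have hA : |αp * (x - 1) / (αp ^ 2 + (x - 1) ^ 2)| ≤ 1 / 2 :=
          half_bound αp (x - 1) hαp0
        have hB : |αm * (x + 1) / (αm ^ 2 + (x + 1) ^ 2)| ≤ 1 / 2 :=
          half_bound αm (x + 1) hαm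
        have := abs_le.mp hA
        have := abs_le.mp hB
        unfold Wenergy
        linarith [(abs_le.mp hA).1, (abs_le.mp hB).2]
    · exact Set.mem_insert _ _
  have hcobdd : IsCoboundedUnder (· ≥ ·) atTop u := by
    apply isCoboundedUnder_ge_of_eventually_le atTop (x := 8)
    filter_upwards [eventually_gt_atTop (0 : ℝ)] with αp hαp using hub αp hαp
  have key : ∀ ε > (0 : ℝ), 4 - ε ≤ Filter.liminf u atTop := by
    intro ε hε
    obtain ⟨M, hM, hbound⟩ := main ε hε
    apply le_liminf_of_le hcobdd
    filter_upwards [eventually_ge_atTop M] with αp hαp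
    apply le_csInf ⟨8, Set.mem_insert _ _⟩
    rintro y (rfl | ⟨x, rfl⟩)
    · linarith
    · exact hbound αp hαp x
  have : ∀ ε > (0 : ℝ), 4 ≤ Filter.liminf u atTop + ε := by
    intro ε hε; linarith [key ε hε]
  exact le_of_forall_pos_le_add this
end

section
/- Fix α₋ > 0 and define, for α₊ > 0 and x ∈ ℝ, F_{α₋,α₊}(x) = 12π + 4π( α₊(x−1)/(α₊² + (x−1)²) − α₋(x+1)/(α₋² + (x+1)²) ). For every ε > 0 there exists M > 0 such that for all α₊ ≥ M and all x ∈ ℝ one has F_{α₋,α₊}(x) ≥ 10π − ε; since the value at x = ∞ equals 12π, the liminf as α₊ → ∞ of inf{ F_{α₋,α₊}(x) : x ∈ ℝ ∪ {∞} } is at least 10π. -/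
open Filter Real

/-- The closed Willmore energy `F_{α₋,α₊}(x) = W^e_closed(S(c^x))` of the
singular comparison surface for horizontal clamping (Theorem 1.2). -/
noncomputable def Fenergy (αm αp x : ℝ) : ℝ :=
  12 * Real.pi + 4 * Real.pi * (αp * (x - 1) / (αp ^ 2 + (x - 1) ^ 2)
    - αm * (x + 1) / (αm ^ 2 + (x + 1) ^ 2))

lemma frac_le_half (a t : ℝ) (ha : 0 < a) : a * t / (a ^ 2 + t ^ 2) ≤ 1 / 2 := by
  have hd : 0 < a ^ 2 + t ^ 2 := by positivity
  rw [div_le_iff₀ hd]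
  nlinarith [sq_nonneg (a - t)]

lemma neg_half_le_frac (a t : ℝ) (ha : 0 < a) : -(1 / 2) ≤ a * t / (a ^ 2 + t ^ 2) := by
  have hd : 0 < a ^ 2 + t ^ 2 := by positivity
  rw [le_div_iff₀ hd]
  nlinarith [sq_nonneg (a + t)]

lemma key (αm : ℝ) (hαm : 0 < αm) (δ : ℝ) (hδ : 0 < δ) (αp : ℝ)
    (hαp : max 1 ((2 + αm / δ) / δ) ≤ αp) (x : ℝ) :
    -(1 / 2) - δ ≤ αp * (x - 1) / (αp ^ 2 + (x - 1) ^ 2)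
      - αm * (x + 1) / (αm ^ 2 + (x + 1) ^ 2) := by
  have hαp1 : (1 : ℝ) ≤ αp := le_trans (le_max_left _ _) hαp
  have hαpp : 0 < αp := lt_of_lt_of_le one_pos hαp1
  set T := αm * (x + 1) / (αm ^ 2 + (x + 1) ^ 2) with hT
  have hTle : T ≤ 1 / 2 := frac_le_half αm (x + 1) hαm
  by_cases hcase : T ≤ δ
  · have := neg_half_le_frac αp (x - 1) hαpp
    linarith
  · push_neg at hcase
    -- T > δ forces 0 < x+1 ≤ αm/δ
    have hdm : 0 < αm ^ 2 + (x + 1) ^ 2 := by positivity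
    have h1 : δ * (αm ^ 2 + (x + 1) ^ 2) < αm * (x + 1) := by
      have := (lt_div_iff₀ hdm).mp hcase
      linarith
    have hxpos : 0 < x + 1 := by nlinarith [sq_nonneg (x + 1), sq_nonneg αm]
    have hxle : x + 1 ≤ αm / δ := by
      rw [le_div_iff₀ hδ]
      nlinarith [sq_nonneg αm]
    obtain ⟨C, hC⟩ : ∃ C : ℝ, C = 2 + αm / δ := ⟨_, rfl⟩
    have hCδ : C / δ ≤ αp := by rw [hC]; exact le_trans (le_max_right _ _) hαp
    have hC0 : 0 < C := by rw [hC]; positivity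
    have hs1 : -C ≤ x - 1 := by
      have h0 : 0 < αm / δ := by positivity
      rw [hC]; linarith
    have hs2 : x - 1 ≤ C := by rw [hC]; linarith
    -- αp * (x-1)/(αp²+(x-1)²) ≥ -C/αp ≥ -δ
    have hd2 : 0 < αp ^ 2 + (x - 1) ^ 2 := by positivity
    have hb1 : -C / αp ≤ αp * (x - 1) / (αp ^ 2 + (x - 1) ^ 2) := by
      rw [div_le_div_iff₀ hαpp hd2]
      nlinarith [sq_nonneg (x - 1)]
    have hb2 : -δ ≤ -C / αp := by
      rw [neg_div, neg_le_neg_iff, div_le_iff₀ hαpp]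
      calc C = (C / δ) * δ := by field_simp
        _ ≤ αp * δ := by nlinarith
        _ = δ * αp := by ring
    linarith

lemma main_bound (αm : ℝ) (hαm : 0 < αm) :
    ∀ ε > (0 : ℝ), ∃ M > (0 : ℝ), ∀ αp ≥ M, ∀ x : ℝ,
        10 * Real.pi - ε ≤ Fenergy αm αp x := by
  intro ε hε
  have hπ := Real.pi_pos
  set δ : ℝ := ε / (4 * Real.pi) with hδdef
  have hδ : 0 < δ := by positivity
  refine ⟨max 1 ((2 + αm / δ) / δ), lt_of_lt_of_le one_pos (le_max_left _ _), ?_⟩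
  intro αp hαp x
  have h := key αm hαm δ hδ αp hαp x
  have h4 : 4 * Real.pi * δ = ε := by
    rw [hδdef]; field_simp
  unfold Fenergy
  nlinarith [mul_le_mul_of_nonneg_left h (by positivity : (0:ℝ) ≤ 4 * Real.pi)]

/-- Theorem 1.2, asymptotic part: for fixed `α₋ > 0`, for every
`ε > 0` there is `M > 0` with `F_{α₋,α₊}(x) ≥ 10π − ε` for all `α₊ ≥ M` and all
`x ∈ ℝ`; since the value at `x = ∞` is `12π`, the liminf as `α₊ → ∞` of the
infimum of `F_{α₋,α₊}` over `ℝ ∪ {∞}` is at least `10π`. -/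
theorem willmore_energy_asymptotic_lower_bound (αm : ℝ) (hαm : 0 < αm) :
    (∀ ε > (0 : ℝ), ∃ M > (0 : ℝ), ∀ αp ≥ M, ∀ x : ℝ,
        10 * Real.pi - ε ≤ Fenergy αm αp x) ∧
    10 * Real.pi ≤ Filter.liminf
        (fun αp : ℝ =>
          sInf (insert (12 * Real.pi) (Set.range fun x : ℝ => Fenergy αm αp x)))
        atTop := by
  have hπ := Real.pi_pos
  refine ⟨main_bound αm hαm, ?_⟩
  set u : ℝ → ℝ := fun αp =>
    sInf (insert (12 * Real.pi) (Set.range fun x : ℝ => Fenergy αm αp x)) with hu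
  -- eventual lower bound for every ε
  have hev : ∀ ε > (0 : ℝ), ∀ᶠ αp in atTop, 10 * Real.pi - ε ≤ u αp := by
    intro ε hε
    obtain ⟨M, hM, hB⟩ := main_bound αm hαm ε hε
    filter_upwards [eventually_ge_atTop M] with αp hαp
    apply le_csInf ⟨12 * Real.pi, Set.mem_insert _ _⟩
    rintro b (rfl | ⟨x, rfl⟩)
    · linarith
    · exact hB αp hαp x
  -- cobounded: u eventually ≤ 12π
  have hub : ∀ᶠ αp in atTop, u αp ≤ 12 * Real.pi := by
    obtain ⟨M, hM, hB⟩ := main_bound αm hαm 1 one_pos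
    filter_upwards [eventually_ge_atTop M] with αp hαp
    apply csInf_le
    · refine ⟨10 * Real.pi - 1, ?_⟩
      rintro b (rfl | ⟨x, rfl⟩)
      · linarith
      · exact hB αp hαp x
    · exact Set.mem_insert _ _
  have hcob : IsCoboundedUnder (· ≥ ·) atTop u :=
    (isBoundedUnder_of_eventually_le hub).isCoboundedUnder_ge
  have hlim : ∀ ε > (0 : ℝ), 10 * Real.pi - ε ≤ Filter.liminf u atTop := fun ε hε =>
    le_liminf_of_le hcob (hev ε hε)
  refine le_of_forall_pos_le_add fun ε hε => ?_
  linarith [hlim ε hε]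
end
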